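/- Let (A, A*) be a Leonard pair on a (d+1)-dimensional K-vector space with A-eigenvalues θ_0, ..., θ_d, A*-eigenvalues a*_i = tr(E_i A*), where E_i are the primitive idempotents of A, and define P(x,y) = x² − βxy + y² − γ(x+y) − ϱ. For scalars β, γ, ϱ, γ*, ω, η ∈ K, the equation A²A* − β·AA*A + A*A² − γ·(AA* + A*A) − ϱ·A* = γ*·A² + ω·A + η·I holds if and only if P(θ_{i−1}, θ_i) = 0 for 1 ≤ i ≤ d and a*_i · P(θ_i, θ_i) = γ*·θ_i² + ω·θ_i + η for 0 ≤ i ≤ d. -/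

import Mathlib

/-
In the eigenbasis `c` of `A` the matrix of `A` is `diagonal θ`, so the `(i, j)` entry of the
matrix of the left-hand side is `P (θ i) (θ j) * B i j`, while the right-hand side is diagonal with
entries `γ* θ i ^ 2 + ω θ i + η`. Off the diagonal, `B i j` vanishes for `|i - j| > 1` and not for
`|i - j| = 1`, and `P` is symmetric, so the off-diagonal equations are exactly
`P (θ (i - 1)) (θ i) = 0`. On the diagonal, `B i i` is the trace of `E i * B`, that is `a*_i`.
-/

/-- A square matrix is irreducible tridiagonal: nonzero entries lie within
distance one of the diagonal, and all sub- and superdiagonal entries are nonzero. -/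
def IsIrreducibleTridiagonal {K : Type*} [Field K] {n : ℕ}
    (M : Matrix (Fin n) (Fin n) K) : Prop :=
  (∀ i j : Fin n, ((i : ℕ) + 1 < j ∨ (j : ℕ) + 1 < i) → M i j = 0) ∧
  (∀ i j : Fin n, ((i : ℕ) + 1 = j ∨ (j : ℕ) + 1 = i) → M i j ≠ 0)

namespace Matrix

variable {n R : Type*} [DecidableEq n]

theorem eq_diagonal_iff [Zero R] (N : Matrix n n R) (q : n → R) :
    N = diagonal q ↔ (∀ i j, i ≠ j → N i j = 0) ∧ ∀ i, N i i = q i := by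
  refine ⟨fun h => ⟨fun i j hij => by simp [h, hij], fun i => by simp [h]⟩,
    fun ⟨hoff, hdiag⟩ => ?_⟩
  ext i j
  obtain rfl | hij := eq_or_ne i j
  · simp [hdiag]
  · simp [hoff i j hij, hij]

theorem tridiagonalRelation_diagonal_apply [Fintype n] [CommRing R] (θ : n → R)
    (M : Matrix n n R) (β γ ϱ : R) (i j : n) :
    (diagonal θ ^ 2 * M - β • (diagonal θ * M * diagonal θ) + M * diagonal θ ^ 2 -
        γ • (diagonal θ * M + M * diagonal θ) - ϱ • M) i j =
      (θ i ^ 2 - β * θ i * θ j + θ j ^ 2 - γ * (θ i + θ j) - ϱ) * M i j := by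
  simp only [diagonal_pow, Pi.pow_apply, sub_apply, add_apply, smul_apply, diagonal_mul,
    mul_diagonal, smul_eq_mul]
  ring

theorem smul_sq_add_smul_add_smul_one_diagonal [Fintype n] [CommRing R] (θ : n → R)
    (a b e : R) :
    a • diagonal θ ^ 2 + b • diagonal θ + e • (1 : Matrix n n R) =
      diagonal fun i => a * θ i ^ 2 + b * θ i + e := by
  ext i j
  obtain rfl | hij := eq_or_ne i j <;> simp [diagonal_pow, *]

end Matrix

theorem LinearMap.trace_toLin_single_one_mul {R V ι : Type*} [CommRing R] [AddCommGroup V]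
    [Module R V] [Fintype ι] [DecidableEq ι] (c : Module.Basis ι R V) (f : Module.End R V)
    (i : ι) :
    LinearMap.trace R V (Matrix.toLin c c (Matrix.single i i 1) * f) =
      LinearMap.toMatrix c c f i i := by
  rw [LinearMap.trace_eq_matrix_trace R c, LinearMap.toMatrix_mul, LinearMap.toMatrix_toLin,
    Matrix.trace_single_mul, one_smul]

theorem IsIrreducibleTridiagonal.offDiag_mul_eq_zero_iff {K : Type*} [Field K] {d : ℕ}
    {M : Matrix (Fin (d + 1)) (Fin (d + 1)) K} (hM : IsIrreducibleTridiagonal M)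
    {f : Fin (d + 1) → Fin (d + 1) → K} (hf : ∀ i j, f i j = f j i) :
    (∀ i j, i ≠ j → f i j * M i j = 0) ↔
      ∀ i : ℕ, (h : i < d) → f ⟨i, Nat.lt_succ_of_lt h⟩ ⟨i + 1, Nat.succ_lt_succ h⟩ = 0 := by
  constructor
  · intro h i hi
    exact (mul_eq_zero.mp (h _ _ (by simp [Fin.ext_iff]))).resolve_right (hM.2 _ _ (Or.inl rfl))
  · intro h
    have adjacent : ∀ i j : Fin (d + 1), (i : ℕ) + 1 = j → f i j = 0 := by
      rintro ⟨i, hi⟩ ⟨j, hj⟩ (rfl : i + 1 = j)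
      exact h i (by omega)
    intro i j hij
    have hval : (i : ℕ) ≠ j := Fin.val_ne_of_ne hij
    by_cases hfar : (i : ℕ) + 1 < j ∨ (j : ℕ) + 1 < i
    · rw [hM.1 i j hfar, mul_zero]
    · rcases Nat.lt_or_gt_of_ne hval with hlt | hgt
      · rw [adjacent i j (by omega), zero_mul]
      · rw [hf, adjacent j i (by omega), zero_mul]

theorem stmt_13 {K V : Type*} [Field K] [AddCommGroup V] [Module K V]
    (d : ℕ) (A B : Module.End K V)
    (c : Module.Basis (Fin (d + 1)) K V)
    (hAdiag : (LinearMap.toMatrix c c A).IsDiag)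
    (hBtri : IsIrreducibleTridiagonal (LinearMap.toMatrix c c B))
    (θ : Fin (d + 1) → K) (hθ : ∀ i, θ i = LinearMap.toMatrix c c A i i)
    (E : Fin (d + 1) → Module.End K V)
    (hE : ∀ i, E i = Matrix.toLin c c (Matrix.single i i 1))
    (as : Fin (d + 1) → K)
    (has : ∀ i, as i = LinearMap.trace K V (E i * B))
    (β γ ϱ γs ω η : K) (P : K → K → K)
    (hP : ∀ x y, P x y = x ^ 2 - β * x * y + y ^ 2 - γ * (x + y) - ϱ) :
    (A ^ 2 * B - β • (A * B * A) + B * A ^ 2 - γ • (A * B + B * A) - ϱ • B =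
      γs • A ^ 2 + ω • A + η • 1) ↔
    ((∀ i : ℕ, (h : i < d) → P (θ ⟨i, by omega⟩) (θ ⟨i + 1, by omega⟩) = 0) ∧
     (∀ i : Fin (d + 1), as i * P (θ i) (θ i) = γs * θ i ^ 2 + ω * θ i + η)) := by
  -- `toMatrixAlgEquiv c` is `toMatrix c c` by definition, but bundled as a multiplicative map.
  have hA : LinearMap.toMatrixAlgEquiv c A = Matrix.diagonal θ := by
    change LinearMap.toMatrix c c A = _
    rw [← hAdiag.diagonal_diag]
    exact congrArg Matrix.diagonal (funext fun i => (hθ i).symm)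
  have has' : ∀ i, as i = LinearMap.toMatrix c c B i i := fun i => by
    rw [has, hE, LinearMap.trace_toLin_single_one_mul]
  have hPsymm : ∀ x y, P x y = P y x := fun x y => by rw [hP, hP]; ring
  rw [← (LinearMap.toMatrixAlgEquiv c).injective.eq_iff]
  simp only [map_sub, map_add, map_smul, map_mul, map_pow, map_one, hA,
    Matrix.smul_sq_add_smul_add_smul_one_diagonal, Matrix.eq_diagonal_iff,
    Matrix.tridiagonalRelation_diagonal_apply, ← hP]
  refine and_congr (hBtri.offDiag_mul_eq_zero_iff fun i j => hPsymm (θ i) (θ j))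
    (forall_congr' fun i => ?_)
  rw [has', mul_comm]
  rfl
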